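/- A quantum channel E has nonzero one-shot zero-error classical capacity if and only if there exist pure states ψ, φ with Tr[|ψ⟩⟨ψ| · (E* ∘ E)(|φ⟩⟨φ|)] = 0. Equivalently, E has zero one-shot zero-error capacity iff the orthogonal complement of the support of the Choi matrix of E* ∘ E contains no product state. -/

import Mathlib

/-!
Hilbert–Schmidt duality turns `Tr[E(ψψ*)† E(φφ*)]` into `Tr[ψψ* (E*∘E)(φφ*)]`, which gives the
first equivalence. Expanded in matrix units, this trace is the quadratic form `⟨x, σ x⟩` of the
Choi matrix `σ` of `E*∘E` at the product vector `x = φ̄ ⊗ ψ`. Writing `C` for the Choi matrix of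
`E`, `σ` is a sum of blocks of a compression of `C ⊗ Cᵀ`, so complete positivity of `E` makes `σ`
positive semidefinite. Hence `⟨x, σ x⟩ = 0` iff `σ x = 0` iff `x ⊥ supp σ`.
-/

open Matrix
open scoped ComplexConjugate ComplexOrder

/-- The (standard) Choi–Jamiołkowski matrix of a linear map. -/
def choi {dA dB : ℕ} (E : Matrix (Fin dA) (Fin dA) ℂ →ₗ[ℂ] Matrix (Fin dB) (Fin dB) ℂ) :
    Matrix (Fin dA × Fin dB) (Fin dA × Fin dB) ℂ :=
  Matrix.of fun p q => E (Matrix.single p.1 q.1 1) p.2 q.2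

/-- The support of a square matrix `σ` on `ℂ^{d_A} ⊗ ℂ^{d_A}`: the span of its
columns, as a subspace of the Euclidean space `ℂ^{d_A} ⊗ ℂ^{d_A}`. -/
noncomputable def matSupport {dA : ℕ} (σ : Matrix (Fin dA × Fin dA) (Fin dA × Fin dA) ℂ) :
    Submodule ℂ (EuclideanSpace ℂ (Fin dA × Fin dA)) :=
  Submodule.span ℂ (Set.range fun j => (WithLp.toLp 2 (fun i => σ i j) : EuclideanSpace ℂ (Fin dA × Fin dA)))

lemma star_trace_conjTranspose_mul {R k : Type*} [NonUnitalSemiring R] [StarRing R] [Fintype k]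
    (A B : Matrix k k R) : star (Aᴴ * B).trace = (Bᴴ * A).trace := by
  rw [← trace_conjTranspose, conjTranspose_mul, conjTranspose_conjTranspose]

lemma trace_vecMulVec_star_mul {R n : Type*} [CommSemiring R] [Star R] [Fintype n]
    (ψ : n → R) (M : Matrix n n R) :
    (vecMulVec ψ (star ψ) * M).trace = star ψ ⬝ᵥ M *ᵥ ψ := by
  rw [vecMulVec_mul, trace_vecMulVec, dotProduct_comm, dotProduct_mulVec]

lemma Matrix.PosSemidef.sum_blocks {R X B : Type*} [Ring R] [PartialOrder R] [StarRing R]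
    [Fintype X] [Fintype B] {M : Matrix (X × B) (X × B) R} (hM : M.PosSemidef) :
    (Matrix.of fun x y => ∑ k, ∑ l, M (x, k) (y, l)).PosSemidef := by
  classical
  let W : Matrix (X × B) X R := Matrix.of fun p x => if p.1 = x then 1 else 0
  have : (Matrix.of fun x y => ∑ k, ∑ l, M (x, k) (y, l)) = Wᴴ * M * W := by
    ext x y
    simp only [W, of_apply, mul_apply, conjTranspose_apply, apply_ite, star_one, star_zero,
      ite_mul, one_mul, zero_mul, mul_one, mul_zero, Fintype.sum_prod_type_right,
      Finset.sum_ite_eq', Finset.mem_univ, ↓reduceIte]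
    exact Finset.sum_comm
  rw [this]
  exact hM.conjTranspose_mul_mul_same W

section Adjoint

variable {R n m : Type*} [CommRing R] [StarRing R] [Fintype n] [Fintype m]
  {E : Matrix n n R →ₗ[R] Matrix m m R} {Estar : Matrix m m R →ₗ[R] Matrix n n R}

lemma trace_map_conjTranspose_mul_map
    (hadj : ∀ A B, (Aᴴ * E B).trace = ((Estar A)ᴴ * B).trace) (A B : Matrix n n R) :
    ((E A)ᴴ * E B).trace = (Aᴴ * Estar (E B)).trace := by
  rw [← star_trace_conjTranspose_mul, hadj, star_trace_conjTranspose_mul]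

lemma adjoint_apply_eq_trace [DecidableEq n]
    (hadj : ∀ A B, (Aᴴ * E B).trace = ((Estar A)ᴴ * B).trace) (Y : Matrix m m R) (i j : n) :
    Estar Y i j = ((E (single i j 1))ᴴ * Y).trace := by
  rw [← star_trace_conjTranspose_mul, hadj]
  simp [trace_mul_single]

end Adjoint

section Choi

variable {dA dB : ℕ}

lemma map_apply_eq_sum_choi
    (F : Matrix (Fin dA) (Fin dA) ℂ →ₗ[ℂ] Matrix (Fin dB) (Fin dB) ℂ)
    (X : Matrix (Fin dA) (Fin dA) ℂ) (k l : Fin dB) :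
    F X k l = ∑ a, ∑ b, X a b * choi F (a, k) (b, l) := by
  conv_lhs => rw [matrix_eq_sum_single X]
  simp only [map_sum, Matrix.sum_apply, choi, of_apply]
  refine Finset.sum_congr rfl fun a _ => Finset.sum_congr rfl fun b _ => ?_
  rw [← mul_one (X a b), ← smul_eq_mul, ← smul_single, _root_.map_smul, Matrix.smul_apply,
    smul_eq_mul, smul_eq_mul, mul_one]

lemma dotProduct_map_vecMulVec_mulVec
    (F : Matrix (Fin dA) (Fin dA) ℂ →ₗ[ℂ] Matrix (Fin dB) (Fin dB) ℂ)
    (φ : Fin dA → ℂ) (ψ : Fin dB → ℂ) :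
    star ψ ⬝ᵥ F (vecMulVec φ (star φ)) *ᵥ ψ =
      star (fun p : Fin dA × Fin dB => star (φ p.1) * ψ p.2) ⬝ᵥ
        choi F *ᵥ fun p => star (φ p.1) * ψ p.2 := by
  simp only [dotProduct, mulVec, map_apply_eq_sum_choi F, vecMulVec_apply, Pi.star_apply,
    star_mul', star_star, Fintype.sum_prod_type_right, Finset.mul_sum, Finset.sum_mul]
  refine Finset.sum_congr rfl fun k _ => ?_
  rw [Finset.sum_comm]
  refine Finset.sum_congr rfl fun a _ => Finset.sum_congr rfl fun l _ =>
    Finset.sum_congr rfl fun b _ => ?_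
  ring

variable {E : Matrix (Fin dA) (Fin dA) ℂ →ₗ[ℂ] Matrix (Fin dB) (Fin dB) ℂ}
  {Estar : Matrix (Fin dB) (Fin dB) ℂ →ₗ[ℂ] Matrix (Fin dA) (Fin dA) ℂ}

lemma choi_adjoint_comp_apply
    (hadj : ∀ A B, (Aᴴ * E B).trace = ((Estar A)ᴴ * B).trace) (a i b j : Fin dA) :
    choi (Estar ∘ₗ E) (a, i) (b, j) =
      ∑ k, ∑ l, choi E (a, k) (b, l) * star (choi E (i, k) (j, l)) := by
  change Estar (E (single a b 1)) i j = _
  rw [adjoint_apply_eq_trace hadj]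
  simp only [trace, diag, mul_apply, conjTranspose_apply, choi, of_apply]
  rw [Finset.sum_comm]
  simp only [mul_comm]

open scoped Kronecker in
lemma posSemidef_choi_adjoint_comp
    (hadj : ∀ A B, (Aᴴ * E B).trace = ((Estar A)ᴴ * B).trace) (hcp : (choi E).PosSemidef) :
    (choi (Estar ∘ₗ E)).PosSemidef := by
  let f : (Fin dA × Fin dA) × Fin dB → (Fin dA × Fin dB) × (Fin dA × Fin dB) :=
    fun p => ((p.1.1, p.2), (p.1.2, p.2))
  have hblocks : choi (Estar ∘ₗ E) =
      of fun x y => ∑ k, ∑ l, ((choi E ⊗ₖ (choi E)ᵀ).submatrix f f) (x, k) (y, l) := by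
    ext ⟨a, i⟩ ⟨b, j⟩
    simp [f, choi_adjoint_comp_apply hadj, hcp.1.apply]
  rw [hblocks]
  exact ((hcp.kronecker hcp.transpose).submatrix f).sum_blocks

end Choi

lemma mem_orthogonal_matSupport_iff {dA : ℕ} {σ : Matrix (Fin dA × Fin dA) (Fin dA × Fin dA) ℂ}
    (hσ : σ.IsHermitian) (w : EuclideanSpace ℂ (Fin dA × Fin dA)) :
    w ∈ (matSupport σ)ᗮ ↔ σ *ᵥ w = 0 := by
  have hcol (j) : inner ℂ (WithLp.toLp 2 fun i => σ i j : EuclideanSpace ℂ _) w = (σ *ᵥ w) j := by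
    simp only [PiLp.inner_apply, RCLike.inner_apply, mulVec, dotProduct]
    refine Finset.sum_congr rfl fun i _ => ?_
    rw [← hσ.apply j i]
    exact mul_comm _ _
  rw [← Submodule.span_singleton_le_iff_mem, ← Submodule.isOrtho_iff_le, Submodule.isOrtho_comm,
    matSupport, Submodule.isOrtho_span]
  simp only [Set.forall_mem_range, Set.mem_singleton_iff, forall_eq, hcol, funext_iff, Pi.zero_apply]

theorem one_shot_zero_error_characterization_general {dA dB : ℕ}
    (E : Matrix (Fin dA) (Fin dA) ℂ →ₗ[ℂ] Matrix (Fin dB) (Fin dB) ℂ)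
    (Estar : Matrix (Fin dB) (Fin dB) ℂ →ₗ[ℂ] Matrix (Fin dA) (Fin dA) ℂ)
    (hadj : ∀ (A : Matrix (Fin dB) (Fin dB) ℂ) (B : Matrix (Fin dA) (Fin dA) ℂ),
      (Aᴴ * E B).trace = ((Estar A)ᴴ * B).trace)
    (hcp : (choi E).PosSemidef) :
    ((∃ ψ φ : Fin dA → ℂ, ψ ≠ 0 ∧ φ ≠ 0 ∧
        ((E (vecMulVec ψ (star ψ)))ᴴ * E (vecMulVec φ (star φ))).trace = 0) ↔
      (∃ ψ φ : Fin dA → ℂ, ψ ≠ 0 ∧ φ ≠ 0 ∧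
        (vecMulVec ψ (star ψ) * Estar (E (vecMulVec φ (star φ)))).trace = 0)) ∧
    ((¬ ∃ ψ φ : Fin dA → ℂ, ψ ≠ 0 ∧ φ ≠ 0 ∧
        ((E (vecMulVec ψ (star ψ)))ᴴ * E (vecMulVec φ (star φ))).trace = 0) ↔
      (∀ u v : Fin dA → ℂ, u ≠ 0 → v ≠ 0 →
        (WithLp.toLp 2 (fun p : Fin dA × Fin dA => u p.1 * v p.2) : EuclideanSpace ℂ (Fin dA × Fin dA)) ∉
          (matSupport (choi (Estar ∘ₗ E)))ᗮ)) := by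
  have hσ : (choi (Estar ∘ₗ E)).PosSemidef := posSemidef_choi_adjoint_comp hadj hcp
  have htrace (ψ φ : Fin dA → ℂ) :
      ((E (vecMulVec ψ (star ψ)))ᴴ * E (vecMulVec φ (star φ))).trace =
        (vecMulVec ψ (star ψ) * Estar (E (vecMulVec φ (star φ)))).trace := by
    rw [trace_map_conjTranspose_mul_map hadj, conjTranspose_vecMulVec, star_star]
  have hkernel (ψ φ : Fin dA → ℂ) :
      (vecMulVec ψ (star ψ) * Estar (E (vecMulVec φ (star φ)))).trace = 0 ↔
        choi (Estar ∘ₗ E) *ᵥ (fun p => star (φ p.1) * ψ p.2) = 0 := by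
    rw [trace_vecMulVec_star_mul, ← hσ.dotProduct_mulVec_zero_iff, ← LinearMap.comp_apply,
      dotProduct_map_vecMulVec_mulVec]
  refine ⟨by simp_rw [htrace], ?_⟩
  simp_rw [htrace, hkernel, mem_orthogonal_matSupport_iff hσ.1]
  constructor
  · rintro h u v hu hv huv
    exact h ⟨v, star u, hv, star_ne_zero.2 hu, by simpa using huv⟩
  · rintro h ⟨ψ, φ, hψ, hφ, hφψ⟩
    exact h (star φ) ψ (star_ne_zero.2 hφ) hψ hφψ

/-- A quantum channel `E` has nonzero one-shot zero-error classical capacity (two input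
pure states whose images have orthogonal supports, `Tr[E(ψ)† E(φ)] = 0`) iff there are
pure states `ψ, φ` with `Tr[|ψ⟩⟨ψ| · (E*∘E)(|φ⟩⟨φ|)] = 0`; equivalently, `E` has zero
one-shot zero-error capacity iff the orthogonal complement of the support of the Choi
matrix of `E* ∘ E` contains no (nonzero) product state. -/
theorem one_shot_zero_error_characterization {dA dB : ℕ}
    (E : Matrix (Fin dA) (Fin dA) ℂ →ₗ[ℂ] Matrix (Fin dB) (Fin dB) ℂ)
    (Estar : Matrix (Fin dB) (Fin dB) ℂ →ₗ[ℂ] Matrix (Fin dA) (Fin dA) ℂ)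
    (hadj : ∀ (A : Matrix (Fin dB) (Fin dB) ℂ) (B : Matrix (Fin dA) (Fin dA) ℂ),
      (Aᴴ * E B).trace = ((Estar A)ᴴ * B).trace)
    (hcp : (choi E).PosSemidef)
    (htp : ∀ X : Matrix (Fin dA) (Fin dA) ℂ, (E X).trace = X.trace) :
    ((∃ ψ φ : Fin dA → ℂ, ψ ≠ 0 ∧ φ ≠ 0 ∧
        ((E (vecMulVec ψ (star ψ)))ᴴ * E (vecMulVec φ (star φ))).trace = 0) ↔
      (∃ ψ φ : Fin dA → ℂ, ψ ≠ 0 ∧ φ ≠ 0 ∧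
        (vecMulVec ψ (star ψ) * Estar (E (vecMulVec φ (star φ)))).trace = 0)) ∧
    ((¬ ∃ ψ φ : Fin dA → ℂ, ψ ≠ 0 ∧ φ ≠ 0 ∧
        ((E (vecMulVec ψ (star ψ)))ᴴ * E (vecMulVec φ (star φ))).trace = 0) ↔
      (∀ u v : Fin dA → ℂ, u ≠ 0 → v ≠ 0 →
        (WithLp.toLp 2 (fun p : Fin dA × Fin dA => u p.1 * v p.2) : EuclideanSpace ℂ (Fin dA × Fin dA)) ∉
          (matSupport (choi (Estar ∘ₗ E)))ᗮ)) :=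
  one_shot_zero_error_characterization_general E Estar hadj hcp
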